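/- Let M be symmetric positive definite and A, B symmetric positive semidefinite real n×n matrices, τ > 0. Every eigenvalue λ of E_d = M⁻¹·blockdiag applied as [[0, τM⁻¹A],[−τM⁻¹B, 0]] (the 2n×2n matrix [[M,0],[0,M]]⁻¹[[0, τA],[−τB, 0]]) satisfies |λ| ≤ (τ/2)(‖M^{-1/2}AM^{-1/2}‖ + ‖M^{-1/2}BM^{-1/2}‖), where ‖·‖ is the spectral norm. -/

import Mathlib

/-!
Conjugating by `diag(M^{1/2}, M^{1/2})` turns `E_d` into the anti-diagonal matrix
`[[0, τA'], [-τB', 0]]` with `A' = M^{-1/2} A M^{-1/2}`, `B' = M^{-1/2} B M^{-1/2}`. For an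
eigenvector `(x, y)` with eigenvalue `λ` we get `|λ| ‖x‖ ≤ τ ‖A'‖ ‖y‖` and `|λ| ‖y‖ ≤ τ ‖B'‖ ‖x‖`;
weighting these by `‖x‖` and `‖y‖` and using `2 ‖x‖ ‖y‖ ≤ ‖x‖² + ‖y‖²` gives the bound.
-/

open Matrix

section
open scoped ComplexOrder

/-- The positive semidefinite square root of a positive semidefinite matrix
(the definition `Matrix.PosSemidef.sqrt` of the older Mathlib, removed since). -/
noncomputable def Matrix.PosSemidef.sqrt {n 𝕜 : Type*} [Fintype n] [DecidableEq n] [RCLike 𝕜]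
    {A : Matrix n n 𝕜} (hA : A.PosSemidef) : Matrix n n 𝕜 :=
  hA.1.eigenvectorUnitary.1 * diagonal ((↑) ∘ (Real.sqrt ∘ hA.1.eigenvalues)) *
  (star hA.1.eigenvectorUnitary : Matrix n n 𝕜)

end

theorem norm_le_of_antidiagonal_eigenvector {𝕜 E F : Type*} [NontriviallyNormedField 𝕜]
    [NormedAddCommGroup E] [NormedSpace 𝕜 E] [NormedAddCommGroup F] [NormedSpace 𝕜 F]
    (C : F →L[𝕜] E) (D : E →L[𝕜] F) {z : 𝕜} {x : E} {y : F} (hxy : x ≠ 0 ∨ y ≠ 0)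
    (hC : C y = z • x) (hD : D x = z • y) : ‖z‖ ≤ (‖C‖ + ‖D‖) / 2 := by
  have hCy : ‖z‖ * ‖x‖ ≤ ‖C‖ * ‖y‖ := by simpa [hC, norm_smul] using C.le_opNorm y
  have hDx : ‖z‖ * ‖y‖ ≤ ‖D‖ * ‖x‖ := by simpa [hD, norm_smul] using D.le_opNorm x
  have hpos : 0 < ‖x‖ ^ 2 + ‖y‖ ^ 2 := by
    rcases hxy with h | h <;> have := norm_pos_iff.2 h <;> positivity
  have hCD : 0 ≤ ‖C‖ + ‖D‖ := by positivity
  -- `‖z‖ (‖x‖² + ‖y‖²) ≤ (‖C‖ + ‖D‖) ‖x‖ ‖y‖ ≤ (‖C‖ + ‖D‖) (‖x‖² + ‖y‖²) / 2`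
  refine le_of_mul_le_mul_right ?_ hpos
  nlinarith [mul_le_mul_of_nonneg_right hCy (norm_nonneg x),
    mul_le_mul_of_nonneg_right hDx (norm_nonneg y), mul_nonneg hCD (sq_nonneg (‖x‖ - ‖y‖))]

theorem EuclideanSpace.norm_sq_eq_re_add_im {m : Type*} [Fintype m] (w : EuclideanSpace ℂ m) :
    ‖w‖ ^ 2 = ‖WithLp.toLp 2 (fun i => (w i).re)‖ ^ 2 + ‖WithLp.toLp 2 (fun i => (w i).im)‖ ^ 2 := by
  rw [EuclideanSpace.norm_sq_eq, EuclideanSpace.norm_sq_eq, EuclideanSpace.norm_sq_eq,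
    ← Finset.sum_add_distrib]
  refine Finset.sum_congr rfl fun i _ => ?_
  rw [Complex.sq_norm, Complex.normSq_apply, Real.norm_eq_abs, Real.norm_eq_abs, sq_abs, sq_abs,
    sq, sq]

namespace Matrix

section Spectrum

variable {m : Type*} [Fintype m] [DecidableEq m]

open scoped ComplexOrder in
theorem PosSemidef.sqrt_eq_cfc {𝕜 : Type*} [RCLike 𝕜] {A : Matrix m m 𝕜} (hA : A.PosSemidef) :
    hA.sqrt = cfc Real.sqrt A :=
  (hA.1.cfc_eq Real.sqrt).symm

open scoped ComplexOrder in
theorem PosSemidef.sqrt_mul_sqrt {𝕜 : Type*} [RCLike 𝕜] {A : Matrix m m 𝕜} (hA : A.PosSemidef) :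
    hA.sqrt * hA.sqrt = A := by
  have hA' : IsSelfAdjoint A := hA.1
  rw [hA.sqrt_eq_cfc, ← cfc_mul Real.sqrt Real.sqrt A]
  conv_rhs => rw [← cfc_id' ℝ A]
  refine cfc_congr fun x hx => Real.mul_self_sqrt ?_
  rw [hA.1.spectrum_real_eq_range_eigenvalues] at hx
  obtain ⟨i, rfl⟩ := hx
  exact hA.eigenvalues_nonneg i

theorem exists_mulVec_eq_smul_of_mem_spectrum {K : Type*} [Field K] {A : Matrix m m K} {z : K}
    (hz : z ∈ spectrum K A) : ∃ v : m → K, v ≠ 0 ∧ A *ᵥ v = z • v := by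
  rw [← spectrum_toLin', ← Module.End.hasEigenvalue_iff_mem_spectrum] at hz
  obtain ⟨v, hv⟩ := hz.exists_hasEigenvector
  exact ⟨v, hv.2, hv.apply_eq_smul⟩

theorem spectrum_map_inv_mul_mul {K L : Type*} [Field K] [Field L] (f : K →+* L)
    (P X : Matrix m m K) (hP : IsUnit P.det) :
    spectrum L ((P⁻¹ * X * P).map f) = spectrum L (X.map f) := by
  set u := Units.map f.mapMatrix.toMonoidHom ((isUnit_iff_isUnit_det P).2 hP).unit
  have hconj : (P⁻¹ * X * P).map f = (↑u⁻¹ : Matrix m m L) * X.map f * u := by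
    simp [u, Units.coe_map_inv, coe_units_inv, Matrix.map_mul]
  rw [hconj, spectrum.units_conjugate']

theorem inv_mul_self_mul_eq {α : Type*} [CommRing α] (P X : Matrix m m α) (hP : IsUnit P.det) :
    (P * P)⁻¹ * X = P⁻¹ * (P⁻¹ * X * P⁻¹) * P := by
  simp only [Matrix.mul_inv_rev, Matrix.mul_assoc, nonsing_inv_mul P hP, Matrix.mul_one]

theorem spectrum_map_fromBlocks_inv_mul (R X Y : Matrix m m ℝ) (hR : IsUnit R.det) :
    spectrum ℂ (((fromBlocks (R * R) 0 0 (R * R))⁻¹ * fromBlocks 0 X Y 0).map ((↑) : ℝ → ℂ)) =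
      spectrum ℂ ((fromBlocks 0 (R⁻¹ * X * R⁻¹) (R⁻¹ * Y * R⁻¹) 0).map ((↑) : ℝ → ℂ)) := by
  set P := fromBlocks R 0 0 R
  have hP : IsUnit P.det := by simpa [P, det_fromBlocks_zero₂₁] using hR.mul hR
  have hPinv : P⁻¹ = fromBlocks R⁻¹ 0 0 R⁻¹ := by
    simpa [P] using inv_fromBlocks_zero₂₁_of_isUnit_iff R 0 R Iff.rfl
  have hPP : fromBlocks (R * R) 0 0 (R * R) = P * P := by simp [P, fromBlocks_multiply]
  have hconj : P⁻¹ * fromBlocks 0 X Y 0 * P⁻¹ =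
      fromBlocks 0 (R⁻¹ * X * R⁻¹) (R⁻¹ * Y * R⁻¹) 0 := by
    simp [hPinv, fromBlocks_multiply, Matrix.mul_assoc]
  rw [hPP, inv_mul_self_mul_eq P _ hP, hconj]
  exact spectrum_map_inv_mul_mul Complex.ofRealHom P _ hP

end Spectrum

section Norm

variable {m : Type*} [Fintype m]

theorem re_map_ofReal_mulVec (C : Matrix m m ℝ) (w : m → ℂ) (i : m) :
    ((C.map (↑) *ᵥ w) i).re = (C *ᵥ fun j => (w j).re) i := by
  simp [mulVec, dotProduct, Complex.re_sum]

theorem im_map_ofReal_mulVec (C : Matrix m m ℝ) (w : m → ℂ) (i : m) :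
    ((C.map (↑) *ᵥ w) i).im = (C *ᵥ fun j => (w j).im) i := by
  simp [mulVec, dotProduct, Complex.im_sum]

variable [DecidableEq m]

theorem norm_toEuclideanCLM_map_ofReal_le (C : Matrix m m ℝ) :
    ‖toEuclideanCLM (𝕜 := ℂ) (C.map (↑))‖ ≤ ‖toEuclideanCLM (𝕜 := ℝ) C‖ := by
  refine ContinuousLinearMap.opNorm_le_bound _ (norm_nonneg _) fun w => ?_
  set Cℝ := toEuclideanCLM (𝕜 := ℝ) C
  have hC (a : m → ℝ) : ‖WithLp.toLp 2 (C *ᵥ a)‖ ^ 2 ≤ ‖Cℝ‖ ^ 2 * ‖WithLp.toLp 2 a‖ ^ 2 := by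
    rw [← mul_pow, ← toEuclideanCLM_toLp]
    exact pow_le_pow_left₀ (norm_nonneg _) (Cℝ.le_opNorm _) 2
  have hsq : ‖toEuclideanCLM (𝕜 := ℂ) (C.map (↑)) w‖ ^ 2 ≤ (‖Cℝ‖ * ‖w‖) ^ 2 := by
    rw [EuclideanSpace.norm_sq_eq_re_add_im, mul_pow, EuclideanSpace.norm_sq_eq_re_add_im w,
      mul_add]
    simp only [ofLp_toEuclideanCLM, re_map_ofReal_mulVec, im_map_ofReal_mulVec]
    exact add_le_add (hC _) (hC _)
  exact (pow_le_pow_iff_left₀ (norm_nonneg _) (by positivity) two_ne_zero).1 hsq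

theorem norm_le_of_mem_spectrum_fromBlocks_zero {𝕜 : Type*} [RCLike 𝕜] (C D : Matrix m m 𝕜)
    {z : 𝕜} (hz : z ∈ spectrum 𝕜 (fromBlocks 0 C D 0)) :
    ‖z‖ ≤ (‖toEuclideanCLM (𝕜 := 𝕜) C‖ + ‖toEuclideanCLM (𝕜 := 𝕜) D‖) / 2 := by
  obtain ⟨v, hv0, hv⟩ := exists_mulVec_eq_smul_of_mem_spectrum hz
  set x := v ∘ Sum.inl
  set y := v ∘ Sum.inr
  have hv_eq : v = Sum.elim x y := by ext (i | i) <;> rfl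
  rw [hv_eq, fromBlocks_mulVec] at hv
  refine norm_le_of_antidiagonal_eigenvector _ _ (x := WithLp.toLp 2 x) (y := WithLp.toLp 2 y)
    ?_ ?_ ?_
  · by_contra! h
    simp_all
  · ext i; simpa using congrFun hv (Sum.inl i)
  · ext i; simpa using congrFun hv (Sum.inr i)

theorem norm_le_of_mem_spectrum_map_fromBlocks_zero (C D : Matrix m m ℝ) {z : ℂ}
    (hz : z ∈ spectrum ℂ ((fromBlocks 0 C D 0).map ((↑) : ℝ → ℂ))) :
    ‖z‖ ≤ (‖toEuclideanCLM (𝕜 := ℝ) C‖ + ‖toEuclideanCLM (𝕜 := ℝ) D‖) / 2 := by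
  rw [fromBlocks_map, Matrix.map_zero _ Complex.ofReal_zero] at hz
  refine (norm_le_of_mem_spectrum_fromBlocks_zero _ _ hz).trans ?_
  gcongr <;> exact norm_toEuclideanCLM_map_ofReal_le _

end Norm

end Matrix

theorem stmt_10_general {n : ℕ} (A B M : Matrix (Fin n) (Fin n) ℝ)
    (hM : M.PosDef)
    (τ : ℝ) (hτ : 0 < τ) :
    ∀ z ∈ spectrum ℂ
      (((Matrix.fromBlocks M 0 0 M)⁻¹ *
        Matrix.fromBlocks 0 (τ • A) (-(τ • B)) 0).map ((↑) : ℝ → ℂ)),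
      ‖z‖ ≤ (τ / 2) *
        (‖Matrix.toEuclideanCLM (𝕜 := ℝ)
            (hM.posSemidef.sqrt⁻¹ * A * hM.posSemidef.sqrt⁻¹)‖ +
         ‖Matrix.toEuclideanCLM (𝕜 := ℝ)
            (hM.posSemidef.sqrt⁻¹ * B * hM.posSemidef.sqrt⁻¹)‖) := by
  intro z hz
  set R := hM.posSemidef.sqrt
  have hRR : R * R = M := hM.posSemidef.sqrt_mul_sqrt
  have hR : IsUnit R.det := by
    have hRR_det : IsUnit (R.det * R.det) := by
      rw [← det_mul, hRR]
      exact (isUnit_iff_isUnit_det M).1 hM.isUnit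
    exact isUnit_of_mul_isUnit_left hRR_det
  rw [← hRR, spectrum_map_fromBlocks_inv_mul R _ _ hR] at hz
  convert norm_le_of_mem_spectrum_map_fromBlocks_zero _ _ hz using 1
  simp only [Matrix.mul_smul, Matrix.smul_mul, Matrix.mul_neg, Matrix.neg_mul, map_neg, map_smul,
    norm_neg, norm_smul, Real.norm_of_nonneg hτ.le]
  ring

/-- Eigenvalue bound for `E_d = [[M,0],[0,M]]⁻¹[[0, τA],[−τB, 0]]`:
every eigenvalue `λ` satisfies
`|λ| ≤ (τ/2)(‖M^{-1/2}AM^{-1/2}‖ + ‖M^{-1/2}BM^{-1/2}‖)`. -/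
theorem stmt_10 {n : ℕ} (A B M : Matrix (Fin n) (Fin n) ℝ)
    (hM : M.PosDef) (hA : A.PosSemidef) (hB : B.PosSemidef)
    (τ : ℝ) (hτ : 0 < τ) :
    ∀ z ∈ spectrum ℂ
      (((Matrix.fromBlocks M 0 0 M)⁻¹ *
        Matrix.fromBlocks 0 (τ • A) (-(τ • B)) 0).map ((↑) : ℝ → ℂ)),
      ‖z‖ ≤ (τ / 2) *
        (‖Matrix.toEuclideanCLM (𝕜 := ℝ)
            (hM.posSemidef.sqrt⁻¹ * A * hM.posSemidef.sqrt⁻¹)‖ +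
         ‖Matrix.toEuclideanCLM (𝕜 := ℝ)
            (hM.posSemidef.sqrt⁻¹ * B * hM.posSemidef.sqrt⁻¹)‖) :=
  stmt_10_general A B M hM τ hτ
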